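/- arXiv:2208.10162 — 7 statements merged into one kernel-verified Lean document; each statement's English description precedes it below -/
import Mathlib

section
/- Let α > 0 and h > 0 be reals. Suppose the quaternion sequence (q_k) satisfies the Euler-discretized stably embedded satellite attitude kinematics q_{k+1} = (1 − αh(‖q_k‖² − 1)) q_k + (h/2) q_k w_k, where each w_k is a pure imaginary quaternion. Define the error state e_k = ‖q_k‖² − 1. Then for every k, e_{k+1} = −1 + (1 + e_k)·((1 − αh·e_k)² + h²‖w_k‖²/4). -/
lemma re_mul_comm (x y : Quaternion ℝ) : (x * y).re = (y * x).re := by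
  simp only [Quaternion.re_mul]; ring

lemma inner_mul_pure (a b : Quaternion ℝ) (hb : b.re = 0) :
    (inner ℝ a (a * b) : ℝ) = 0 := by
  rw [Quaternion.inner_def, star_mul, ← mul_assoc, re_mul_comm, ← mul_assoc,
    Quaternion.star_mul_self]
  simp [Quaternion.re_mul, hb]

/-- The error-state recursion for the Euler-discretized stably embedded
satellite attitude kinematics. -/
theorem error_dynamics (α h : ℝ) (hα : 0 < α) (hh : 0 < h)
    (q w : ℕ → Quaternion ℝ) (hw : ∀ k, (w k).re = 0)
    (hdyn : ∀ k, q (k + 1) =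
      (1 - α * h * (‖q k‖ ^ 2 - 1)) • q k + (h / 2) • (q k * w k))
    (e : ℕ → ℝ) (he : ∀ k, e k = ‖q k‖ ^ 2 - 1) :
    ∀ k, e (k + 1) =
      -1 + (1 + e k) * ((1 - α * h * e k) ^ 2 + h ^ 2 * ‖w k‖ ^ 2 / 4) := by
  intro k
  have hcross : (inner ℝ (q k) (q k * w k) : ℝ) = 0 := inner_mul_pure _ _ (hw k)
  have hek : e k = ‖q k‖ ^ 2 - 1 := he k
  rw [he (k+1), hdyn k, norm_add_sq_real, norm_smul, norm_smul,
    real_inner_smul_left, real_inner_smul_right, hcross, norm_mul, hek]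
  simp only [Real.norm_eq_abs, mul_pow, sq_abs]
  ring
end

section
/- Let α > 0 and h > 0 be reals. Suppose the quaternion sequence (q_k) satisfies q_{k+1} = (1 − αh(‖q_k‖² − 1)) q_k + (h/2) q_k w_k with each w_k pure imaginary, and let e_k = ‖q_k‖² − 1. Then for every k, e_{k+1}² − e_k² = −αh(1 + e_k)(2 − αh·e_k)(2 − 2αh − αh(2 − αh)e_k + (αh)²e_k²)·e_k² + (1 − 2αh(1 + e_k) + (αh)²e_k(1 + e_k))·e_k(1 + e_k)·(h²‖w_k‖²/2) + (1 + e_k)²·(h⁴‖w_k‖⁴/16). -/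
lemma norm_sq_smul_add_smul_mul (c d : ℝ) (q w : Quaternion ℝ) (hw : w.re = 0) :
    ‖c • q + d • (q * w)‖ ^ 2 = c ^ 2 * ‖q‖ ^ 2 + d ^ 2 * ‖q‖ ^ 2 * ‖w‖ ^ 2 := by
  have h1 : ∀ x : Quaternion ℝ, ‖x‖ ^ 2 = Quaternion.normSq x := fun x => by
    rw [sq, ← Quaternion.normSq_eq_norm_mul_self]
  simp only [h1, Quaternion.normSq_def', Quaternion.re_add, Quaternion.imI_add,
    Quaternion.imJ_add, Quaternion.imK_add, Quaternion.re_smul, Quaternion.imI_smul,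
    Quaternion.imJ_smul, Quaternion.imK_smul, Quaternion.re_mul, Quaternion.imI_mul,
    Quaternion.imJ_mul, Quaternion.imK_mul, hw, smul_eq_mul]
  ring

/-- The Lyapunov difference identity for the error dynamics of the
Euler-discretized stably embedded satellite attitude kinematics. -/
theorem lyapunov_difference_identity (α h : ℝ) (hα : 0 < α) (hh : 0 < h)
    (q w : ℕ → Quaternion ℝ) (hw : ∀ k, (w k).re = 0)
    (hdyn : ∀ k, q (k + 1) =
      (1 - α * h * (‖q k‖ ^ 2 - 1)) • q k + (h / 2) • (q k * w k))
    (e : ℕ → ℝ) (he : ∀ k, e k = ‖q k‖ ^ 2 - 1) :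
    ∀ k, e (k + 1) ^ 2 - e k ^ 2 =
      -(α * h) * (1 + e k) * (2 - α * h * e k) *
          (2 - 2 * (α * h) - α * h * (2 - α * h) * e k + (α * h) ^ 2 * e k ^ 2) *
          e k ^ 2
      + (1 - 2 * (α * h) * (1 + e k) + (α * h) ^ 2 * e k * (1 + e k)) *
          (e k * (1 + e k)) * (h ^ 2 * ‖w k‖ ^ 2 / 2)
      + (1 + e k) ^ 2 * (h ^ 4 * ‖w k‖ ^ 4 / 16) := by
  intro k
  have hN : ‖q k‖ ^ 2 = 1 + e k := by rw [he k]; ring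
  have hstep : e (k + 1) = (1 - α * h * e k) ^ 2 * (1 + e k)
      + (h / 2) ^ 2 * (1 + e k) * ‖w k‖ ^ 2 - 1 := by
    rw [he (k + 1), hdyn k, norm_sq_smul_add_smul_mul _ _ _ _ (hw k), hN, he k]
    ring
  rw [hstep]
  ring
end

section
/- Let α > 0, h > 0, 0 < ε < 1, U > 0 and β be reals satisfying conditions (C1) 0 < αh < 2/3, (C2) 0 < β < A(αh,ε) < 1, (C4) 1 − 2αh(1 − ε) + (αh)²ε(1 + ε) ≥ 0, and (C3) δ(h,αh,β) < ε. Suppose the quaternion sequence (q_k) satisfies q_{k+1} = (1 − αh(‖q_k‖² − 1)) q_k + (h/2) q_k w_k with each w_k pure imaginary, and let e_k = ‖q_k‖² − 1. If at step k one has ‖w_k‖ ≤ U and δ(h,αh,0) < |e_k| ≤ δ(h,αh,β), then |e_{k+1}| ≤ |e_k|. -/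
/-!
Put `a = αh`, `t = e_k` and `r = h²‖w_k‖²/4`. Since `w_k` is pure imaginary,
`‖q_{k+1}‖² = ‖q_k‖² ((1 - a t)² + r)`, so `e_{k+1} = (1 + t)((1 - a t)² + r) - 1`.
For `t ≥ 0` this lies in `[-t, t]` as soon as `r ≤ a t (2 - a t)`, and for `t ≤ 0` as soon as
`r ≤ (2 - 2a)(-t)`. Now `r ≤ c := h²U²/4`, and `h² N` is an increasing function of `c`, while
`|e_k| > δ(h, αh, 0)` says `h² N < A t²`. Since `A t²` is at most the value of that function at
the relevant threshold, `c` (hence `r`) lies below the threshold.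
-/

open Quaternion

theorem Quaternion.normSq_coe_add_smul {R : Type*} [CommRing R] {w : ℍ[R]} (hw : w.re = 0)
    (x y : R) : normSq ((x : ℍ[R]) + y • w) = x ^ 2 + y ^ 2 * normSq w := by
  rw [normSq_add, normSq_coe, normSq_smul, star_smul, coe_mul_eq_smul, re_smul, re_smul,
    re_star, hw]
  ring

theorem Quaternion.sq_norm_smul_add_smul_mul {q w : ℍ} (hw : w.re = 0) (x y : ℝ) :
    ‖x • q + y • (q * w)‖ ^ 2 = ‖q‖ ^ 2 * (x ^ 2 + y ^ 2 * ‖w‖ ^ 2) := by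
  have hfactor : x • q + y • (q * w) = q * ((x : ℍ) + y • w) := by
    rw [mul_add, mul_smul_comm, ← coe_mul_eq_smul, ← coe_commutes]
  simp only [sq (‖_‖), ← normSq_eq_norm_mul_self, hfactor, map_mul, normSq_coe_add_smul hw]

theorem sq_mul_lt_mul_sq_of_mul_sqrt_div_lt {h N A t : ℝ} (hh : 0 < h) (hA : 0 < A)
    (ht : h * √(N / A) < |t|) : h ^ 2 * N < A * t ^ 2 := by
  have hpos : 0 < |t| / h := div_pos ((by positivity : 0 ≤ h * √(N / A)).trans_lt ht) hh
  have hlt : N / A < (|t| / h) ^ 2 := by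
    rwa [← Real.sqrt_lt' hpos, lt_div_iff₀ hh, mul_comm]
  rw [div_lt_iff₀ hA, div_pow, sq_abs, div_mul_eq_mul_div, lt_div_iff₀ (by positivity)] at hlt
  linarith

namespace StableEmbedding

/-- `e_{k+1}` as a function of `a = αh`, `r = h²‖w_k‖²/4` and `t = e_k`. -/
def errorStep (a r t : ℝ) : ℝ := (1 + t) * ((1 - a * t) ^ 2 + r) - 1

/-- `A(αh, ε)` with `a = αh`. -/
def coeffA (a ε : ℝ) : ℝ :=
  a * (1 - ε) * (2 - a * ε) * (2 - 2 * a - a * (2 - a) * ε + a ^ 2 * ε ^ 2)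

/-- The quantity of condition (C4). -/
def coeffB (a ε : ℝ) : ℝ := 1 - 2 * a * (1 - ε) + a ^ 2 * ε * (1 + ε)

/-- `h² N(h, a, ε, U)` as a function of `c = h²U²/4`. -/
def scaledN (a ε c : ℝ) : ℝ := 2 * c * (coeffB a ε * (ε * (1 + ε))) + (1 + ε) ^ 2 * c ^ 2

section

variable {a ε : ℝ}

theorem abs_errorStep_le_of_nonneg {r t : ℝ} (ha : 0 ≤ a) (ha' : a ≤ 2 / 3) (ht : 0 ≤ t)
    (ht' : t ≤ 1) (hr : 0 ≤ r) (hrt : r ≤ a * t * (2 - a * t)) :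
    |errorStep a r t| ≤ t := by
  have hQ : 0 ≤ 2 - 2 * a * (1 + t) + a ^ 2 * t * (1 + t) := by
    nlinarith [sq_nonneg (1 - a * (1 + t)), mul_le_mul ha' ha' ha (by norm_num : (0:ℝ) ≤ 2 / 3)]
  have hlower : (1 + t) * (1 - a * t) ^ 2 - 1
      = -t + t * (2 - 2 * a * (1 + t) + a ^ 2 * t * (1 + t)) := by ring
  rw [abs_le, errorStep]
  constructor
  · nlinarith [mul_nonneg ht hQ, mul_nonneg (by linarith : (0:ℝ) ≤ 1 + t) hr]
  · nlinarith [mul_nonneg (by linarith : (0:ℝ) ≤ 1 + t) (sub_nonneg.2 hrt)]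

theorem abs_errorStep_le_of_nonpos {r t : ℝ} (ha : 0 ≤ a) (ha' : a ≤ 2) (ht : t ≤ 0)
    (ht' : -1 ≤ t) (hr : 0 ≤ r) (hrt : r ≤ (2 - 2 * a) * -t) :
    |errorStep a r t| ≤ -t := by
  have h1t : 0 ≤ 1 + t := by linarith
  have hat : 0 ≤ -(a * t) := by nlinarith
  rw [abs_le, neg_neg, errorStep]
  constructor
  · nlinarith [mul_nonneg h1t (by nlinarith : (0:ℝ) ≤ (1 - a * t) ^ 2 + r - 1)]
  · nlinarith [mul_nonneg (mul_nonneg (sq_nonneg t) ha) (by nlinarith : (0:ℝ) ≤ 2 - a - a * t),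
      mul_nonneg (neg_nonneg.2 ht) hr]

theorem coeffA_pos (ha : 0 < a) (ha' : a < 2 / 3) (hε' : ε < 1) :
    0 < coeffA a ε := by
  have h₁ : 0 < 1 - ε := by linarith
  have h₂ : 0 < 2 - a * ε := by nlinarith
  have h₃ : 0 < 2 - 2 * a - a * (2 - a) * ε + a ^ 2 * ε ^ 2 := by
    nlinarith [sq_nonneg (2 * a * ε - (2 - a))]
  unfold coeffA
  positivity

theorem coeffA_le (ha : 0 < a) (ha' : a < 2 / 3) (hε : 0 < ε) (hε' : ε < 1)
    (hB : 0 ≤ coeffB a ε) : coeffA a ε ≤ ((2 - 2 * a) * (1 + ε)) ^ 2 := by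
  set L₁ := a * (1 - ε) * (2 - a * ε)
  set L₂ := 2 - 2 * a - a * (2 - a) * ε + a ^ 2 * ε ^ 2
  have hL₁ : 0 ≤ L₁ := by
    have : 0 ≤ 1 - ε := by linarith
    have : 0 ≤ 2 - a * ε := by nlinarith
    positivity
  have hL₂ : 0 ≤ L₂ := by nlinarith [sq_nonneg (2 * a * ε - (2 - a))]
  have hsum : L₁ + L₂ ≤ 2 * ((2 - 2 * a) * (1 + ε)) := by
    unfold coeffB at hB
    nlinarith [mul_nonneg hB hε.le, sq_nonneg (a * ε), mul_pos ha hε]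
  calc coeffA a ε = L₁ * L₂ := rfl
    _ ≤ ((L₁ + L₂) / 2) ^ 2 := by nlinarith [sq_nonneg (L₁ - L₂)]
    _ ≤ ((2 - 2 * a) * (1 + ε)) ^ 2 := by gcongr; linarith

theorem scaledN_le_scaledN {m c : ℝ} (hB : 0 ≤ coeffB a ε) (hε : 0 ≤ ε) (hm : 0 ≤ m)
    (hmc : m ≤ c) : scaledN a ε m ≤ scaledN a ε c := by
  have : 0 ≤ coeffB a ε * (ε * (1 + ε)) := mul_nonneg hB (mul_nonneg hε (by linarith))
  unfold scaledN
  gcongr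

theorem coeffA_mul_sq_le_scaledN_of_nonpos {t : ℝ} (ha : 0 < a) (ha' : a < 2 / 3)
    (hε : 0 < ε) (hε' : ε < 1) (hB : 0 ≤ coeffB a ε) (ht : t ≤ 0) :
    coeffA a ε * t ^ 2 ≤ scaledN a ε ((2 - 2 * a) * -t) := by
  have hm : 0 ≤ (2 - 2 * a) * -t := mul_nonneg (by linarith) (by linarith)
  have : 0 ≤ 2 * ((2 - 2 * a) * -t) * (coeffB a ε * (ε * (1 + ε))) := by positivity
  calc coeffA a ε * t ^ 2 ≤ ((2 - 2 * a) * (1 + ε)) ^ 2 * t ^ 2 := by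
        gcongr; exact coeffA_le ha ha' hε hε' hB
    _ = (1 + ε) ^ 2 * ((2 - 2 * a) * -t) ^ 2 := by ring
    _ ≤ scaledN a ε ((2 - 2 * a) * -t) := by unfold scaledN; linarith

theorem coeffA_mul_sq_le_scaledN_of_nonneg {t : ℝ} (ha : 0 < a) (ha' : a < 2 / 3)
    (hε : 0 < ε) (hε' : ε < 1) (hB : 0 ≤ coeffB a ε) (ht : 0 ≤ t) (htε : t ≤ ε) :
    coeffA a ε * t ^ 2 ≤ scaledN a ε (a * t * (2 - a * t)) := by
  set L := (1 - ε) * (2 - 2 * a - a * (2 - a) * ε + a ^ 2 * ε ^ 2)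
  have hL : L ≤ (1 + ε) ^ 2 * a * (2 - a * ε) + 2 * coeffB a ε * (1 + ε) := by
    unfold coeffB
    nlinarith [sq_nonneg (1 - 2 * a), sq_nonneg ε, sq_nonneg (a * ε), mul_pos hε ha,
      sq_nonneg (a - ε), sq_nonneg (a + ε),
      mul_nonneg (mul_nonneg hε.le ha.le) (sub_nonneg.2 hε'.le)]
  have hLt : L * t ≤ (1 + ε) ^ 2 * a * (2 - a * ε) * t + 2 * coeffB a ε * (1 + ε) * ε := by
    have h2B : 0 ≤ 2 * coeffB a ε * (1 + ε) := by positivity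
    nlinarith [mul_le_mul_of_nonneg_left hL ht, mul_le_mul_of_nonneg_left htε h2B]
  have hm : 0 ≤ a * t * (2 - a * ε) := by
    have : 0 ≤ 2 - a * ε := by nlinarith
    positivity
  calc coeffA a ε * t ^ 2 = a * t * (2 - a * ε) * (L * t) := by unfold coeffA; ring
    _ ≤ a * t * (2 - a * ε) * ((1 + ε) ^ 2 * a * (2 - a * ε) * t
          + 2 * coeffB a ε * (1 + ε) * ε) := by gcongr
    _ = scaledN a ε (a * t * (2 - a * ε)) := by unfold scaledN; ring
    _ ≤ scaledN a ε (a * t * (2 - a * t)) := by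
        refine scaledN_le_scaledN hB hε.le hm ?_
        gcongr

theorem abs_errorStep_le {r c t : ℝ} (ha : 0 < a) (ha' : a < 2 / 3) (hε : 0 < ε)
    (hε' : ε < 1) (hB : 0 ≤ coeffB a ε) (htε : |t| < ε) (hr : 0 ≤ r) (hrc : r ≤ c)
    (hN : scaledN a ε c < coeffA a ε * t ^ 2) :
    |errorStep a r t| ≤ |t| := by
  obtain ⟨htl, htu⟩ := abs_lt.mp htε
  rcases le_total 0 t with ht | ht
  · have hct : c < a * t * (2 - a * t) := by
      by_contra! hle
      have hm : 0 ≤ a * t * (2 - a * t) := mul_nonneg (by positivity) (by nlinarith)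
      exact (coeffA_mul_sq_le_scaledN_of_nonneg ha ha' hε hε' hB ht htu.le).not_gt
        (lt_of_le_of_lt (scaledN_le_scaledN hB hε.le hm hle) hN)
    rw [abs_of_nonneg ht]
    exact abs_errorStep_le_of_nonneg ha.le ha'.le ht (by linarith) hr (by linarith)
  · have hct : c < (2 - 2 * a) * -t := by
      by_contra! hle
      have hm : 0 ≤ (2 - 2 * a) * -t := mul_nonneg (by linarith) (by linarith)
      exact (coeffA_mul_sq_le_scaledN_of_nonpos ha ha' hε hε' hB ht).not_gt
        (lt_of_le_of_lt (scaledN_le_scaledN hB hε.le hm hle) hN)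
    rw [abs_of_nonpos ht]
    exact abs_errorStep_le_of_nonpos ha.le (by linarith) ht (by linarith) hr (by linarith)

end

end StableEmbedding

open StableEmbedding

theorem error_nonincreasing_general (α h ε U A N δβ δ0 : ℝ)
    (hh : 0 < h) (hε0 : 0 < ε) (hε1 : ε < 1)
    (hA : A = α * h * (1 - ε) * (2 - α * h * ε) *
      (2 - 2 * (α * h) - α * h * (2 - α * h) * ε + (α * h) ^ 2 * ε ^ 2))
    (hN : N = (1 - 2 * (α * h) * (1 - ε) + (α * h) ^ 2 * ε * (1 + ε)) *
        (ε * (1 + ε)) * U ^ 2 / 2 + (1 + ε) ^ 2 * (h ^ 2 * U ^ 4 / 16))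
    (hδ0 : δ0 = h * Real.sqrt (N / A))
    (hC1 : 0 < α * h ∧ α * h < 2 / 3)
    (hC4 : 1 - 2 * (α * h) * (1 - ε) + (α * h) ^ 2 * ε * (1 + ε) ≥ 0)
    (hC3 : δβ < ε)
    (q w : ℕ → Quaternion ℝ) (hw : ∀ k, (w k).re = 0)
    (hdyn : ∀ k, q (k + 1) =
      (1 - α * h * (‖q k‖ ^ 2 - 1)) • q k + (h / 2) • (q k * w k))
    (e : ℕ → ℝ) (he : ∀ k, e k = ‖q k‖ ^ 2 - 1)
    (k : ℕ) (hwk : ‖w k‖ ≤ U) (hlo : δ0 < |e k|) (hhi : |e k| ≤ δβ) :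
    |e (k + 1)| ≤ |e k| := by
  have hA' : A = coeffA (α * h) ε := hA
  have hApos : 0 < A := hA' ▸ coeffA_pos hC1.1 hC1.2 hε1
  have hstep : e (k + 1) = errorStep (α * h) (h ^ 2 * ‖w k‖ ^ 2 / 4) (e k) := by
    have hq : ‖q k‖ ^ 2 = 1 + e k := by rw [he]; ring
    rw [he, hdyn, sq_norm_smul_add_smul_mul (hw k), hq, errorStep]
    ring
  have hscaled : scaledN (α * h) ε (h ^ 2 * U ^ 2 / 4) < A * e k ^ 2 := by
    calc scaledN (α * h) ε (h ^ 2 * U ^ 2 / 4) = h ^ 2 * N := by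
          rw [hN, scaledN, coeffB]; ring
      _ < A * e k ^ 2 := sq_mul_lt_mul_sq_of_mul_sqrt_div_lt hh hApos (hδ0 ▸ hlo)
  rw [hstep]
  refine abs_errorStep_le hC1.1 hC1.2 hε0 hε1 hC4 (hhi.trans_lt hC3) (by positivity) ?_
    (hA' ▸ hscaled)
  gcongr

/-- Between the δ(·,·,0)-ball and the δ(·,·,β)-ball, the magnitude of the
error does not increase. -/
theorem error_nonincreasing (α h ε U β A N δβ δ0 : ℝ)
    (hα : 0 < α) (hh : 0 < h) (hε0 : 0 < ε) (hε1 : ε < 1) (hU : 0 < U)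
    (hA : A = α * h * (1 - ε) * (2 - α * h * ε) *
      (2 - 2 * (α * h) - α * h * (2 - α * h) * ε + (α * h) ^ 2 * ε ^ 2))
    (hN : N = (1 - 2 * (α * h) * (1 - ε) + (α * h) ^ 2 * ε * (1 + ε)) *
        (ε * (1 + ε)) * U ^ 2 / 2 + (1 + ε) ^ 2 * (h ^ 2 * U ^ 4 / 16))
    (hδβ : δβ = h * Real.sqrt (N / (A - β)))
    (hδ0 : δ0 = h * Real.sqrt (N / A))
    (hC1 : 0 < α * h ∧ α * h < 2 / 3)
    (hC2 : 0 < β ∧ β < A ∧ A < 1)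
    (hC4 : 1 - 2 * (α * h) * (1 - ε) + (α * h) ^ 2 * ε * (1 + ε) ≥ 0)
    (hC3 : δβ < ε)
    (q w : ℕ → Quaternion ℝ) (hw : ∀ k, (w k).re = 0)
    (hdyn : ∀ k, q (k + 1) =
      (1 - α * h * (‖q k‖ ^ 2 - 1)) • q k + (h / 2) • (q k * w k))
    (e : ℕ → ℝ) (he : ∀ k, e k = ‖q k‖ ^ 2 - 1)
    (k : ℕ) (hwk : ‖w k‖ ≤ U) (hlo : δ0 < |e k|) (hhi : |e k| ≤ δβ) :
    |e (k + 1)| ≤ |e k| :=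
  error_nonincreasing_general α h ε U A N δβ δ0 hh hε0 hε1 hA hN hδ0 hC1 hC4 hC3 q w hw hdyn e he k
    hwk hlo hhi
end

section
/- Let α > 0, h > 0, 0 < ε < 1, U > 0 and β be reals satisfying conditions (C1) 0 < αh < 2/3, (C2) 0 < β < A(αh,ε) < 1, (C4) 1 − 2αh(1 − ε) + (αh)²ε(1 + ε) ≥ 0, and (C3) δ(h,αh,β) < ε. Suppose the quaternion sequence (q_k) satisfies q_{k+1} = (1 − αh(‖q_k‖² − 1)) q_k + (h/2) q_k w_k with each w_k pure imaginary and ‖w_k‖ ≤ U for all k, and let e_k = ‖q_k‖² − 1. Then the set S_δ = { e ∈ ℝ : |e| < δ(h,αh,β) } is a positively invariant attractor of the error sequence with region of attraction S_ε = { e ∈ ℝ : |e| ≤ ε }; that is: (i) if |e_k| < δ(h,αh,β) for some k then |e_j| < δ(h,αh,β) for all j ≥ k, and (ii) if |e_0| ≤ ε then |e_k| ≤ ε for all k and there exists K ∈ ℕ such that |e_k| < δ(h,αh,β) for all k ≥ K. -/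
/-!
Write `a = αh` and `t_k = (h/2)² ‖w_k‖²`. Since `w_k` is pure imaginary, `‖q_{k+1}‖² = ‖q_k‖² ((1 - a e_k)² + t_k)`,
so the error obeys the scalar recursion `e_{k+1} = e_k G(e_k) + (1 + e_k) t_k` with
`G(x) = ((1 + x)(1 - a x)² - 1) / x`. On `|x| ≤ ε` the gain satisfies `1 - G(x)² = a(1+x)(2-ax)(1+G(x)) ≥ A`
because `G` is decreasing, and bounding the cross term `2 x G(x) (1+x) t` (by (C4) when `x < 0 < x G(x)`) gives
`e_{k+1}² ≤ (1 - A) e_k² + h² N = (1 - A) e_k² + (A - β) δ²`. Hence `e²` cannot leave `[0, δ²)`, and outside it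
`e²` shrinks by the factor `1 - β`, which gives both invariance and geometric convergence into `S_δ`.
-/

def errorGain (a x : ℝ) : ℝ := 1 - 2 * a + (a ^ 2 - 2 * a) * x + a ^ 2 * x ^ 2

def errorMap (a x t : ℝ) : ℝ := x * errorGain a x + (1 + x) * t

def contractionRate (a ε : ℝ) : ℝ :=
  a * (1 - ε) * (2 - a * ε) * (2 - 2 * a - a * (2 - a) * ε + a ^ 2 * ε ^ 2)

def crossCoeff (a ε : ℝ) : ℝ := 1 - 2 * a * (1 - ε) + a ^ 2 * ε * (1 + ε)

section ErrorGain

variable {a ε x : ℝ}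

lemma errorGain_zero (a : ℝ) : errorGain a 0 = 1 - 2 * a := by
  simp [errorGain]

lemma one_add_errorGain_one (a : ℝ) : 1 + errorGain a 1 = 2 * (1 - a) ^ 2 := by
  unfold errorGain; ring

lemma one_sub_errorGain_sq (a x : ℝ) :
    1 - errorGain a x ^ 2 = a * (1 + x) * (2 - a * x) * (1 + errorGain a x) := by
  unfold errorGain; ring

lemma contractionRate_eq (a ε : ℝ) :
    contractionRate a ε = a * (1 - ε) * (2 - a * ε) * (1 + errorGain a ε) := by
  unfold contractionRate errorGain; ring

lemma errorGain_antitoneOn (ha0 : 0 ≤ a) (ha : a ≤ 2 / 3) :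
    AntitoneOn (errorGain a) (Set.Iic 1) := by
  intro x hx y hy hxy
  have hsum : a * (x + y) ≤ a * 2 := mul_le_mul_of_nonneg_left (by linarith [hx.out, hy.out]) ha0
  have hdiff : errorGain a x - errorGain a y = (y - x) * (a * (2 - a - a * (x + y))) := by
    unfold errorGain; ring
  linarith [mul_nonneg (sub_nonneg.2 hxy) (mul_nonneg ha0 (by linarith : 0 ≤ 2 - a - a * (x + y)))]

lemma errorGain_sq_le_one_sub_contractionRate (ha0 : 0 ≤ a) (ha : a ≤ 2 / 3) (hε1 : ε ≤ 1)
    (hx : |x| ≤ ε) : errorGain a x ^ 2 ≤ 1 - contractionRate a ε := by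
  obtain ⟨hxε, hεx⟩ := abs_le.mp hx
  have hanti := errorGain_antitoneOn ha0 ha
  have hGε : errorGain a ε ≤ errorGain a x :=
    hanti (Set.mem_Iic.2 (by linarith)) (Set.mem_Iic.2 hε1) hεx
  have hG1 : errorGain a 1 ≤ errorGain a ε := hanti (Set.mem_Iic.2 hε1) (Set.mem_Iic.2 le_rfl) hε1
  have hε : 0 ≤ 1 + errorGain a ε := by nlinarith [one_add_errorGain_one a]
  have : contractionRate a ε ≤ a * (1 + x) * (2 - a * x) * (1 + errorGain a x) := by
    rw [contractionRate_eq]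
    have h1x : 0 ≤ a * (1 + x) := mul_nonneg ha0 (by linarith)
    have h2x : a * x ≤ a * ε := mul_le_mul_of_nonneg_left hεx ha0
    have h2ε : a * ε ≤ 2 := by nlinarith
    gcongr
    all_goals first | linarith | exact mul_nonneg h1x (by linarith)
  linarith [one_sub_errorGain_sq a x]

lemma errorGain_le_of_nonneg (ha0 : 0 ≤ a) (ha : a ≤ 2 / 3) (hx0 : 0 ≤ x) (hx1 : x ≤ 1) :
    errorGain a x ≤ 1 - 2 * a :=
  errorGain_zero a ▸ errorGain_antitoneOn ha0 ha (by simp) (Set.mem_Iic.2 hx1) hx0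

lemma le_errorGain_of_nonpos (ha0 : 0 ≤ a) (ha : a ≤ 2 / 3) (hx0 : x ≤ 0) :
    1 - 2 * a ≤ errorGain a x :=
  errorGain_zero a ▸ errorGain_antitoneOn ha0 ha (Set.mem_Iic.2 (by linarith)) (by simp) hx0

lemma sq_two_mul_sub_one_le (ha1 : 1 / 2 < a) (ha : a < 2 / 3) (hε0 : 0 < ε) (hε1 : ε < 1)
    (hM : 0 ≤ crossCoeff a ε) :
    (2 * a - 1) ^ 2 ≤ ε * (2 + ε) * (1 - contractionRate a ε - (2 * a - 1) ^ 2) := by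
  have ha0 : 0 < a := by linarith
  set B := 4 * a + 2 * a ^ 2 - 4 * a ^ 3 - 6 * a ^ 2 * ε + a ^ 4 * ε + 4 * a ^ 3 * ε ^ 2 - a ^ 4 * ε ^ 3
  have hεB : 1 - contractionRate a ε - (2 * a - 1) ^ 2 = ε * B := by
    unfold contractionRate; ring
  rw [hεB]
  rcases le_or_gt ε (1 / 4) with hsmall | hlarge
  · -- `crossCoeff a ε = (1 - 2a) + ε a (2 + a + aε)`
    have hρ : 2 * a - 1 ≤ ε * (a * (2 + a + a * ε)) := by unfold crossCoeff at hM; linarith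
    have hpoly : (a * (2 + a + a * ε)) ^ 2 ≤ (2 + ε) * B := by
      nlinarith [mul_pos hε0 hε0, sq_nonneg (a * ε), mul_nonneg (mul_nonneg hε0.le hε0.le) hε0.le,
        mul_nonneg hε0.le (sq_nonneg a), mul_nonneg (sub_nonneg.2 hsmall) (sq_nonneg (a * ε)),
        mul_pos ha0 hε0, sq_nonneg (2 * a - 1), mul_nonneg (mul_nonneg ha0.le ha0.le) ha0.le,
        mul_nonneg ha0.le hε0.le]
    calc (2 * a - 1) ^ 2 ≤ (ε * (a * (2 + a + a * ε))) ^ 2 := by gcongr; linarith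
      _ = ε ^ 2 * (a * (2 + a + a * ε)) ^ 2 := by ring
      _ ≤ ε ^ 2 * ((2 + ε) * B) := by gcongr
      _ = ε * (2 + ε) * (ε * B) := by ring
  · have hB : 64 / 81 ≤ B := by
      nlinarith [sq_nonneg (ε - 1), sq_nonneg (a - 2 / 3), mul_nonneg (sub_nonneg.2 hε1.le) (sq_nonneg a),
        mul_nonneg (mul_nonneg ha0.le ha0.le) (mul_nonneg hε0.le (sub_nonneg.2 hε1.le)),
        sq_nonneg (a * ε), mul_nonneg (sub_nonneg.2 ha.le) hε0.le,
        mul_nonneg (mul_nonneg (sub_nonneg.2 ha.le) hε0.le) hε0.le,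
        mul_nonneg (mul_nonneg ha0.le hε0.le) hε0.le]
    calc (2 * a - 1) ^ 2 ≤ 1 / 9 := by nlinarith
      _ ≤ (1 / 4) ^ 2 * (2 + 1 / 4) * (64 / 81) := by norm_num
      _ ≤ ε ^ 2 * (2 + ε) * B := by gcongr
      _ = ε * (2 + ε) * (ε * B) := by ring

lemma errorGain_le_crossCoeff (ha0 : 0 ≤ a) (ha : a ≤ 2 / 3) (hε0 : 0 ≤ ε) (hx0 : 0 ≤ x)
    (hx1 : x ≤ 1) : errorGain a x ≤ crossCoeff a ε := by
  have hG := errorGain_le_of_nonneg ha0 ha hx0 hx1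
  have : 0 ≤ 2 * a * ε + a ^ 2 * ε * (1 + ε) := by positivity
  unfold crossCoeff
  linarith

lemma errorGain_sq_le_of_neg (ha0 : 0 < a) (ha : a < 2 / 3) (hε0 : 0 < ε) (hε1 : ε < 1)
    (hM : 0 ≤ crossCoeff a ε) (hx0 : x ≤ 0) (hG0 : errorGain a x < 0) :
    errorGain a x ^ 2 ≤ ε * (2 + ε) * (1 - contractionRate a ε - errorGain a x ^ 2) := by
  have hGge : 1 - 2 * a ≤ errorGain a x := le_errorGain_of_nonpos ha0.le ha.le hx0
  have hG2 : errorGain a x ^ 2 ≤ (2 * a - 1) ^ 2 := sq_le_sq' (by linarith) (by linarith)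
  calc errorGain a x ^ 2 ≤ (2 * a - 1) ^ 2 := hG2
    _ ≤ ε * (2 + ε) * (1 - contractionRate a ε - (2 * a - 1) ^ 2) :=
      sq_two_mul_sub_one_le (by linarith) ha hε0 hε1 hM
    _ ≤ ε * (2 + ε) * (1 - contractionRate a ε - errorGain a x ^ 2) := by gcongr

lemma add_sq_le_of_sq_le_mul {u v c D : ℝ} (hc : 0 ≤ c) (hu : u ^ 2 ≤ D)
    (huc : u ^ 2 ≤ c * (D - u ^ 2)) : (u + v) ^ 2 ≤ D + (1 + c) * v ^ 2 := by
  have hcross : 2 * (u * v) ≤ (D - u ^ 2) + c * v ^ 2 := by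
    have hsq : (2 * (u * v)) ^ 2 ≤ ((D - u ^ 2) + c * v ^ 2) ^ 2 := calc
      (2 * (u * v)) ^ 2 = 4 * u ^ 2 * v ^ 2 := by ring
      _ ≤ 4 * (D - u ^ 2) * (c * v ^ 2) := by nlinarith [sq_nonneg v]
      _ ≤ ((D - u ^ 2) + c * v ^ 2) ^ 2 := four_mul_le_sq_add _ _
    exact (abs_le_of_sq_le_sq hsq (by positivity)).trans' (le_abs_self _)
  nlinarith

lemma errorMap_sq_le {t T : ℝ} (ha0 : 0 < a) (ha : a < 2 / 3) (hε0 : 0 < ε) (hε1 : ε < 1)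
    (hM : 0 ≤ crossCoeff a ε) (hx : |x| ≤ ε) (ht0 : 0 ≤ t) (htT : t ≤ T) :
    errorMap a x t ^ 2 ≤
      (1 - contractionRate a ε) * x ^ 2 + 2 * crossCoeff a ε * ε * (1 + ε) * T + (1 + ε) ^ 2 * T ^ 2 := by
  obtain ⟨hxε, hεx⟩ := abs_le.mp hx
  unfold errorMap
  set G := errorGain a x
  set P := 1 - contractionRate a ε
  have hGP : G ^ 2 ≤ P := errorGain_sq_le_one_sub_contractionRate ha0.le ha.le hε1.le hx
  have huP : (x * G) ^ 2 ≤ P * x ^ 2 := by rw [mul_pow]; nlinarith [sq_nonneg x]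
  have hv0 : 0 ≤ (1 + x) * t := mul_nonneg (by linarith) ht0
  have hvT : (1 + x) * t ≤ (1 + ε) * T := mul_le_mul (by linarith) htT ht0 (by linarith)
  have hvsq : ((1 + x) * t) ^ 2 ≤ (1 + ε) ^ 2 * T ^ 2 := by
    rw [← mul_pow]; exact pow_le_pow_left₀ hv0 hvT 2
  have hR : 0 ≤ 2 * crossCoeff a ε * ε * (1 + ε) * T := by
    have := ht0.trans htT
    positivity
  rcases le_or_gt (x * G * ((1 + x) * t)) 0 with hneg | hpos
  · nlinarith
  rcases le_or_gt 0 x with hx0 | hx0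
  · have hG0 : 0 < G := pos_of_mul_pos_right (pos_of_mul_pos_left hpos hv0) hx0
    have hGM : G ≤ crossCoeff a ε := errorGain_le_crossCoeff ha0.le ha.le hε0.le hx0 (by linarith)
    have huv : x * G * ((1 + x) * t) ≤ ε * crossCoeff a ε * ((1 + ε) * T) :=
      mul_le_mul (mul_le_mul hεx hGM hG0.le hε0.le) hvT hv0 (by positivity)
    nlinarith
  · have hG0 : G < 0 := by
      by_contra! h
      nlinarith [mul_nonpos_of_nonpos_of_nonneg (mul_nonpos_of_nonpos_of_nonneg hx0.le h) hv0]
    have hGc : G ^ 2 ≤ ε * (2 + ε) * (P - G ^ 2) :=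
      errorGain_sq_le_of_neg ha0 ha hε0 hε1 hM hx0.le hG0
    -- Young's inequality with weight `ε (2 + ε) = (1 + ε)² - 1`
    have hyoung := add_sq_le_of_sq_le_mul (v := (1 + x) * t) (c := ε * (2 + ε)) (by positivity) huP
      (by rw [mul_pow]; nlinarith [mul_le_mul_of_nonneg_left hGc (sq_nonneg x)])
    have hvT' : ((1 + x) * t) ^ 2 ≤ T ^ 2 :=
      pow_le_pow_left₀ hv0 (by nlinarith) 2
    nlinarith [mul_le_mul_of_nonneg_left hvT' (by positivity : (0:ℝ) ≤ 1 + ε * (2 + ε))]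

end ErrorGain

section Dissipation

variable {x : ℕ → ℝ} {A β δ ε : ℝ}

lemma abs_succ_lt_of_abs_lt (hβ : 0 < β) (hA1 : A ≤ 1) (hδε : δ ≤ ε)
    (hstep : ∀ k, |x k| ≤ ε → x (k + 1) ^ 2 ≤ (1 - A) * x k ^ 2 + (A - β) * δ ^ 2)
    {k : ℕ} (hk : |x k| < δ) : |x (k + 1)| < δ := by
  have hδ : 0 < δ := (abs_nonneg _).trans_lt hk
  have hsq : x k ^ 2 ≤ δ ^ 2 := sq_le_sq' (by linarith [neg_abs_le (x k)]) (le_abs_self _ |>.trans hk.le)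
  refine abs_lt_of_sq_lt_sq ?_ hδ.le
  nlinarith [hstep k (hk.le.trans hδε), mul_le_mul_of_nonneg_left hsq (sub_nonneg.2 hA1),
    mul_pos hβ (mul_pos hδ hδ)]

lemma sq_succ_le_of_le_abs (hβA : β ≤ A) (hδ : 0 ≤ δ)
    (hstep : ∀ k, |x k| ≤ ε → x (k + 1) ^ 2 ≤ (1 - A) * x k ^ 2 + (A - β) * δ ^ 2)
    {k : ℕ} (hkε : |x k| ≤ ε) (hδk : δ ≤ |x k|) : x (k + 1) ^ 2 ≤ (1 - β) * x k ^ 2 := by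
  have hsq : δ ^ 2 ≤ x k ^ 2 := by rw [← sq_abs (x k)]; gcongr
  nlinarith [hstep k hkε, mul_le_mul_of_nonneg_left hsq (sub_nonneg.2 hβA)]

lemma abs_lt_of_abs_lt_of_le (hβ : 0 < β) (hA1 : A ≤ 1) (hδε : δ ≤ ε)
    (hstep : ∀ k, |x k| ≤ ε → x (k + 1) ^ 2 ≤ (1 - A) * x k ^ 2 + (A - β) * δ ^ 2)
    {k j : ℕ} (hk : |x k| < δ) (hkj : k ≤ j) : |x j| < δ := by
  induction j, hkj using Nat.le_induction with
  | base => exact hk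
  | succ n _ ih => exact abs_succ_lt_of_abs_lt hβ hA1 hδε hstep ih

lemma abs_le_of_abs_zero_le (hβ : 0 < β) (hβA : β ≤ A) (hA1 : A ≤ 1) (hδ : 0 ≤ δ) (hδε : δ ≤ ε)
    (hstep : ∀ k, |x k| ≤ ε → x (k + 1) ^ 2 ≤ (1 - A) * x k ^ 2 + (A - β) * δ ^ 2)
    (h0 : |x 0| ≤ ε) (k : ℕ) : |x k| ≤ ε := by
  induction k with
  | zero => exact h0
  | succ n ih =>
    rcases lt_or_ge |x n| δ with hn | hn
    · exact (abs_succ_lt_of_abs_lt hβ hA1 hδε hstep hn).le.trans hδε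
    · have hsq := sq_succ_le_of_le_abs hβA hδ hstep ih hn
      exact (sq_le_sq.1 (by nlinarith [sq_nonneg (x n)])).trans ih

lemma abs_lt_or_sq_le_pow (hβ : 0 < β) (hβA : β ≤ A) (hA1 : A ≤ 1) (hδ : 0 ≤ δ) (hδε : δ ≤ ε)
    (hstep : ∀ k, |x k| ≤ ε → x (k + 1) ^ 2 ≤ (1 - A) * x k ^ 2 + (A - β) * δ ^ 2)
    (h0 : |x 0| ≤ ε) (k : ℕ) : |x k| < δ ∨ x k ^ 2 ≤ (1 - β) ^ k * ε ^ 2 := by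
  induction k with
  | zero =>
    right
    rw [pow_zero, one_mul, ← sq_abs]
    exact pow_le_pow_left₀ (abs_nonneg _) h0 2
  | succ n ih =>
    rcases lt_or_ge |x n| δ with hn | hn
    · exact Or.inl (abs_succ_lt_of_abs_lt hβ hA1 hδε hstep hn)
    · refine Or.inr ?_
      have hpow := ih.resolve_left hn.not_gt
      calc x (n + 1) ^ 2
          ≤ (1 - β) * x n ^ 2 :=
            sq_succ_le_of_le_abs hβA hδ hstep (abs_le_of_abs_zero_le hβ hβA hA1 hδ hδε hstep h0 n) hn
        _ ≤ (1 - β) * ((1 - β) ^ n * ε ^ 2) := by gcongr; linarith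
        _ = (1 - β) ^ (n + 1) * ε ^ 2 := by ring

lemma exists_forall_abs_lt (hβ : 0 < β) (hβA : β ≤ A) (hA1 : A ≤ 1) (hδ : 0 < δ) (hδε : δ ≤ ε)
    (hstep : ∀ k, |x k| ≤ ε → x (k + 1) ^ 2 ≤ (1 - A) * x k ^ 2 + (A - β) * δ ^ 2)
    (h0 : |x 0| ≤ ε) : ∃ K, ∀ k, K ≤ k → |x k| < δ := by
  have hε : 0 < ε := hδ.trans_le hδε
  obtain ⟨K, hK⟩ := exists_pow_lt_of_lt_one (div_pos (pow_pos hδ 2) (pow_pos hε 2))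
    (by linarith : 1 - β < 1)
  refine ⟨K, fun k hKk => abs_lt_of_abs_lt_of_le hβ hA1 hδε hstep ?_ hKk⟩
  refine (abs_lt_or_sq_le_pow hβ hβA hA1 hδ.le hδε hstep h0 K).elim id fun hsq => ?_
  refine abs_lt_of_sq_lt_sq (hsq.trans_lt ?_) hδ.le
  rwa [← lt_div_iff₀ (pow_pos hε 2)]

end Dissipation

lemma sq_norm_smul_add_smul_mul {p r : Quaternion ℝ} (c s : ℝ) (hr : r.re = 0) :
    ‖c • p + s • (p * r)‖ ^ 2 = ‖p‖ ^ 2 * (c ^ 2 + s ^ 2 * ‖r‖ ^ 2) := by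
  have hfac : c • p + s • (p * r) = p * ((c : Quaternion ℝ) + s • r) := by
    rw [mul_add, Quaternion.mul_coe_eq_smul, mul_smul_comm]
  have hsq (z : Quaternion ℝ) : ‖z‖ ^ 2 = Quaternion.normSq z := by
    rw [Quaternion.normSq_eq_norm_mul_self, sq]
  have hnormSq : Quaternion.normSq ((c : Quaternion ℝ) + s • r) =
      c ^ 2 + s ^ 2 * Quaternion.normSq r := by
    simp only [Quaternion.normSq_def', Quaternion.re_add, Quaternion.re_coe, Quaternion.re_smul,
      Quaternion.imI_add, Quaternion.imJ_add, Quaternion.imK_add, Quaternion.imI_coe,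
      Quaternion.imJ_coe, Quaternion.imK_coe, Quaternion.imI_smul, Quaternion.imJ_smul,
      Quaternion.imK_smul, hr, smul_eq_mul]
    ring
  rw [hfac, norm_mul, mul_pow, hsq (_ + _), hnormSq, hsq r]

lemma sq_norm_sub_one_eq_errorMap {p r : Quaternion ℝ} (a s : ℝ) (hr : r.re = 0) :
    ‖(1 - a * (‖p‖ ^ 2 - 1)) • p + s • (p * r)‖ ^ 2 - 1 =
      errorMap a (‖p‖ ^ 2 - 1) (s ^ 2 * ‖r‖ ^ 2) := by
  rw [sq_norm_smul_add_smul_mul _ _ hr]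
  unfold errorMap errorGain
  ring

theorem error_invariant_attractor_general (α h ε U β A N δ : ℝ)
    (hh : 0 < h) (hε0 : 0 < ε) (hε1 : ε < 1) (hU : 0 < U)
    (hA : A = α * h * (1 - ε) * (2 - α * h * ε) *
      (2 - 2 * (α * h) - α * h * (2 - α * h) * ε + (α * h) ^ 2 * ε ^ 2))
    (hN : N = (1 - 2 * (α * h) * (1 - ε) + (α * h) ^ 2 * ε * (1 + ε)) *
        (ε * (1 + ε)) * U ^ 2 / 2 + (1 + ε) ^ 2 * (h ^ 2 * U ^ 4 / 16))
    (hδ : δ = h * Real.sqrt (N / (A - β)))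
    (hC1 : 0 < α * h ∧ α * h < 2 / 3)
    (hC2 : 0 < β ∧ β < A ∧ A < 1)
    (hC4 : 1 - 2 * (α * h) * (1 - ε) + (α * h) ^ 2 * ε * (1 + ε) ≥ 0)
    (hC3 : δ < ε)
    (q w : ℕ → Quaternion ℝ) (hw : ∀ k, (w k).re = 0)
    (hwU : ∀ k, ‖w k‖ ≤ U)
    (hdyn : ∀ k, q (k + 1) =
      (1 - α * h * (‖q k‖ ^ 2 - 1)) • q k + (h / 2) • (q k * w k))
    (e : ℕ → ℝ) (he : ∀ k, e k = ‖q k‖ ^ 2 - 1) :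
    (∀ k, |e k| < δ → ∀ j, k ≤ j → |e j| < δ) ∧
    (|e 0| ≤ ε → (∀ k, |e k| ≤ ε) ∧ ∃ K, ∀ k, K ≤ k → |e k| < δ) := by
  obtain ⟨ha0, ha⟩ := hC1
  obtain ⟨hβ0, hβA, hA1⟩ := hC2
  have hN0 : 0 < N := by
    rw [hN]
    exact add_pos_of_nonneg_of_pos
      (div_nonneg (mul_nonneg (mul_nonneg hC4 (by positivity)) (sq_nonneg U)) zero_le_two)
      (by positivity)
  have hAβ : 0 < A - β := sub_pos.2 hβA
  have hNβ : 0 < N / (A - β) := div_pos hN0 hAβ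
  have hδ0 : 0 < δ := hδ ▸ mul_pos hh (Real.sqrt_pos.2 hNβ)
  have hforcing : (A - β) * δ ^ 2 = 2 * crossCoeff (α * h) ε * ε * (1 + ε) * (h ^ 2 * U ^ 2 / 4)
      + (1 + ε) ^ 2 * (h ^ 2 * U ^ 2 / 4) ^ 2 := by
    rw [hδ, mul_pow, Real.sq_sqrt hNβ.le, hN]
    unfold crossCoeff
    field_simp [hAβ.ne']
    ring
  have hstep (k : ℕ) (hk : |e k| ≤ ε) : e (k + 1) ^ 2 ≤ (1 - A) * e k ^ 2 + (A - β) * δ ^ 2 := by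
    have hwk : (h / 2) ^ 2 * ‖w k‖ ^ 2 ≤ h ^ 2 * U ^ 2 / 4 := by
      have := pow_le_pow_left₀ (norm_nonneg _) (hwU k) 2
      nlinarith
    rw [hforcing, ← add_assoc, hA, he (k + 1), hdyn k, sq_norm_sub_one_eq_errorMap _ _ (hw k), ← he k]
    exact errorMap_sq_le ha0 ha hε0 hε1 hC4 hk (by positivity) hwk
  exact ⟨fun k hk j hkj => abs_lt_of_abs_lt_of_le hβ0 hA1.le hC3.le hstep hk hkj,
    fun h0 => ⟨abs_le_of_abs_zero_le hβ0 hβA.le hA1.le hδ0.le hC3.le hstep h0,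
      exists_forall_abs_lt hβ0 hβA.le hA1.le hδ0 hC3.le hstep h0⟩⟩

/-- The set `S_δ = {e : |e| < δ}` is a positively invariant attractor of the
error dynamics of the Euler-discretized stably embedded satellite attitude
kinematics, with region of attraction `S_ε = {e : |e| ≤ ε}`. -/
theorem error_invariant_attractor (α h ε U β A N δ : ℝ)
    (hα : 0 < α) (hh : 0 < h) (hε0 : 0 < ε) (hε1 : ε < 1) (hU : 0 < U)
    (hA : A = α * h * (1 - ε) * (2 - α * h * ε) *
      (2 - 2 * (α * h) - α * h * (2 - α * h) * ε + (α * h) ^ 2 * ε ^ 2))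
    (hN : N = (1 - 2 * (α * h) * (1 - ε) + (α * h) ^ 2 * ε * (1 + ε)) *
        (ε * (1 + ε)) * U ^ 2 / 2 + (1 + ε) ^ 2 * (h ^ 2 * U ^ 4 / 16))
    (hδ : δ = h * Real.sqrt (N / (A - β)))
    (hC1 : 0 < α * h ∧ α * h < 2 / 3)
    (hC2 : 0 < β ∧ β < A ∧ A < 1)
    (hC4 : 1 - 2 * (α * h) * (1 - ε) + (α * h) ^ 2 * ε * (1 + ε) ≥ 0)
    (hC3 : δ < ε)
    (q w : ℕ → Quaternion ℝ) (hw : ∀ k, (w k).re = 0)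
    (hwU : ∀ k, ‖w k‖ ≤ U)
    (hdyn : ∀ k, q (k + 1) =
      (1 - α * h * (‖q k‖ ^ 2 - 1)) • q k + (h / 2) • (q k * w k))
    (e : ℕ → ℝ) (he : ∀ k, e k = ‖q k‖ ^ 2 - 1) :
    (∀ k, |e k| < δ → ∀ j, k ≤ j → |e j| < δ) ∧
    (|e 0| ≤ ε → (∀ k, |e k| ≤ ε) ∧ ∃ K, ∀ k, K ≤ k → |e k| < δ) :=
  error_invariant_attractor_general α h ε U β A N δ hh hε0 hε1 hU hA hN hδ hC1 hC2 hC4 hC3 q w hw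
    hwU hdyn e he
end

section
/- For every real ε with 0 < ε < 1, both 2/(2ε + 1) > 2/3 and (1 + ε − √(1 − ε²))/(ε(1 + ε)) > 2/3 hold; consequently, every real a with 0 < a < 2/3 satisfies a < min( 2/(2ε + 1), (1 + ε − √(1 − ε²))/(ε(1 + ε)) ) for all ε ∈ (0,1). Moreover, the infimum over ε ∈ (0,1) of min( 2/(2ε + 1), (1 + ε − √(1 − ε²))/(ε(1 + ε)) ) equals 2/3. -/
lemma two_thirds_key (ε : ℝ) (h0 : 0 < ε) (h1 : ε < 1) :
    2 / 3 < 2 / (2 * ε + 1) ∧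
    2 / 3 < (1 + ε - Real.sqrt (1 - ε ^ 2)) / (ε * (1 + ε)) := by
  constructor
  · rw [div_lt_div_iff₀ (by norm_num) (by linarith)]
    linarith
  · have hεε : 0 < ε * (1 + ε) := by nlinarith
    rw [lt_div_iff₀ hεε]
    have hy : (0:ℝ) < 1 + ε - 2 / 3 * (ε * (1 + ε)) := by nlinarith
    have hs : Real.sqrt (1 - ε ^ 2) < 1 + ε - 2 / 3 * (ε * (1 + ε)) := by
      rw [show (1:ℝ) + ε - 2 / 3 * (ε * (1 + ε)) = Real.sqrt ((1 + ε - 2 / 3 * (ε * (1 + ε))) ^ 2) from (Real.sqrt_sq hy.le).symm]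
      apply Real.sqrt_lt_sqrt (by nlinarith)
      nlinarith [sq_nonneg ε, sq_nonneg (1 - ε), mul_pos h0 (sub_pos.2 h1)]
    linarith

/-- For `0 < ε < 1`, both `2/(2ε+1)` and `(1 + ε − √(1 − ε²))/(ε(1 + ε))`
exceed `2/3`; hence every `0 < a < 2/3` is below their minimum for all such
`ε`, and the infimum over `ε ∈ (0,1)` of the minimum equals `2/3`. -/
theorem two_thirds_bound :
    (∀ ε : ℝ, 0 < ε → ε < 1 →
      2 / 3 < 2 / (2 * ε + 1) ∧
      2 / 3 < (1 + ε - Real.sqrt (1 - ε ^ 2)) / (ε * (1 + ε))) ∧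
    (∀ a : ℝ, 0 < a → a < 2 / 3 → ∀ ε : ℝ, 0 < ε → ε < 1 →
      a < min (2 / (2 * ε + 1))
        ((1 + ε - Real.sqrt (1 - ε ^ 2)) / (ε * (1 + ε)))) ∧
    IsGLB ((fun ε : ℝ => min (2 / (2 * ε + 1))
        ((1 + ε - Real.sqrt (1 - ε ^ 2)) / (ε * (1 + ε)))) '' Set.Ioo 0 1)
      (2 / 3) := by
  refine ⟨two_thirds_key, ?_, ?_, ?_⟩
  · intro a _ ha ε h0 h1
    obtain ⟨k1, k2⟩ := two_thirds_key ε h0 h1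
    exact lt_min (ha.trans k1) (ha.trans k2)
  · rintro x ⟨ε, ⟨h0, h1⟩, rfl⟩
    obtain ⟨k1, k2⟩ := two_thirds_key ε h0 h1
    exact le_of_lt (lt_min k1 k2)
  · intro b hb
    by_contra hcon
    push_neg at hcon
    have hbpos : (0:ℝ) < b := by linarith
    set c : ℝ := (2 - b) / (2 * b) with hc
    have hc1 : c < 1 := by
      rw [hc, div_lt_one (by linarith)]; linarith
    set ε : ℝ := max (1/2) ((c + 1) / 2) with hε
    have hε0 : 0 < ε := lt_of_lt_of_le (by norm_num) (le_max_left _ _)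
    have hε1 : ε < 1 := max_lt (by norm_num) (by linarith)
    have hεc : c < ε := lt_of_lt_of_le (by linarith) (le_max_right _ _)
    have hmem : (fun ε : ℝ => min (2 / (2 * ε + 1))
        ((1 + ε - Real.sqrt (1 - ε ^ 2)) / (ε * (1 + ε)))) ε ∈
        (fun ε : ℝ => min (2 / (2 * ε + 1))
        ((1 + ε - Real.sqrt (1 - ε ^ 2)) / (ε * (1 + ε)))) '' Set.Ioo 0 1 :=
      Set.mem_image_of_mem _ ⟨hε0, hε1⟩
    have hble := hb hmem
    have hle : b ≤ 2 / (2 * ε + 1) := le_trans hble (min_le_left _ _)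
    have h2c : 2 * c + 1 = 2 / b := by field_simp [hc]; rw [hc]; field_simp; ring
    have : 2 / (2 * ε + 1) < b := by
      rw [div_lt_iff₀ (by linarith)]
      have : 2 / b < 2 * ε + 1 := by rw [← h2c]; linarith
      calc (2:ℝ) = b * (2 / b) := by field_simp
        _ < b * (2 * ε + 1) := by exact (mul_lt_mul_iff_right₀ hbpos).2 this
    linarith
end

section
/- For every real ε with 0 < ε < 1 and every real U > 0, there exist reals α > 0, h > 0 and β > 0 such that: (C1) 0 < αh < 2/3; (C2) 0 < β < A(αh,ε) < 1; (C4) 1 − 2αh(1 − ε) + (αh)²ε(1 + ε) ≥ 0; and (C3) δ(h,αh,β) < ε, where A(αh,ε) = αh(1 − ε)(2 − αh·ε)(2 − 2αh − αh(2 − αh)ε + (αh)²ε²), N(h,αh,ε,U) = (1 − 2αh(1 − ε) + (αh)²ε(1 + ε))·ε(1 + ε)·U²/2 + (1 + ε)²·h²U⁴/16, and δ(h,αh,β) = h·√(N(h,αh,ε,U)/(A(αh,ε) − β)). -/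
/-- For any `0 < ε < 1` and `U > 0` one can find `α > 0`, `h > 0` and `β > 0`
satisfying the conditions (C1)–(C4) of the attractor theorem. -/
theorem exists_parameters (ε U : ℝ) (hε0 : 0 < ε) (hε1 : ε < 1) (hU : 0 < U) :
    ∃ α h β : ℝ, 0 < α ∧ 0 < h ∧ 0 < β ∧
      (0 < α * h ∧ α * h < 2 / 3) ∧
      (0 < β ∧
        β < α * h * (1 - ε) * (2 - α * h * ε) *
          (2 - 2 * (α * h) - α * h * (2 - α * h) * ε + (α * h) ^ 2 * ε ^ 2) ∧
        α * h * (1 - ε) * (2 - α * h * ε) *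
          (2 - 2 * (α * h) - α * h * (2 - α * h) * ε + (α * h) ^ 2 * ε ^ 2)
          < 1) ∧
      (1 - 2 * (α * h) * (1 - ε) + (α * h) ^ 2 * ε * (1 + ε) ≥ 0) ∧
      h * Real.sqrt
        (((1 - 2 * (α * h) * (1 - ε) + (α * h) ^ 2 * ε * (1 + ε)) *
            (ε * (1 + ε)) * U ^ 2 / 2 + (1 + ε) ^ 2 * (h ^ 2 * U ^ 4 / 16)) /
          (α * h * (1 - ε) * (2 - α * h * ε) *
            (2 - 2 * (α * h) - α * h * (2 - α * h) * ε + (α * h) ^ 2 * ε ^ 2)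
            - β)) < ε := by
  set A : ℝ := (1/4) * (1 - ε) * (2 - (1/4) * ε) *
      (2 - 2 * (1/4) - (1/4) * (2 - (1/4)) * ε + (1/4) ^ 2 * ε ^ 2) with hAdef
  have hA : 0 < A := by
    have h1 : (0:ℝ) < 1 - ε := by linarith
    have h2 : (0:ℝ) < 2 - (1/4) * ε := by linarith
    have h3 : (0:ℝ) < 2 - 2 * (1/4) - (1/4) * (2 - (1/4)) * ε + (1/4) ^ 2 * ε ^ 2 := by
      nlinarith [sq_nonneg ε]
    rw [hAdef]; positivity
  have hA1 : A < 1 := by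
    have f1 : (1:ℝ) - ε ≤ 1 := by linarith
    have f2 : (2:ℝ) - (1/4) * ε ≤ 2 := by linarith
    have f3 : 2 - 2 * (1/4) - (1/4) * (2 - (1/4)) * ε + ((1:ℝ)/4) ^ 2 * ε ^ 2 ≤ 25/16 := by
      nlinarith
    have g1 : (0:ℝ) ≤ 1 - ε := by linarith
    have g2 : (0:ℝ) ≤ 2 - (1/4) * ε := by linarith
    have g3 : (0:ℝ) ≤ 2 - 2 * (1/4) - (1/4) * (2 - (1/4)) * ε + ((1:ℝ)/4) ^ 2 * ε ^ 2 := by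
      nlinarith
    rw [hAdef]; nlinarith [mul_nonneg g1 g2, mul_nonneg (mul_nonneg g1 g2) g3]
  set Q : ℝ := 1 - 2 * (1/4) * (1 - ε) + ((1:ℝ)/4) ^ 2 * ε * (1 + ε) with hQdef
  have hQ : 0 < Q := by rw [hQdef]; nlinarith
  set c1 : ℝ := Q * (ε * (1 + ε)) * U ^ 2 / 2 with hc1
  set c2 : ℝ := (1 + ε) ^ 2 * U ^ 4 / 16 with hc2
  have hc1p : 0 < c1 := by rw [hc1]; positivity
  have hc2p : 0 < c2 := by rw [hc2]; positivity
  set D : ℝ := ε ^ 2 * (A / 2) / (c1 + c2) with hD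
  have hDp : 0 < D := by rw [hD]; positivity
  set h : ℝ := min 1 (Real.sqrt D / 2) with hh
  have hhp : 0 < h := by
    rw [hh]; exact lt_min one_pos (by positivity)
  have hh1 : h ≤ 1 := min_le_left _ _
  have hhD : h ^ 2 < D := by
    have h2 : h ≤ Real.sqrt D / 2 := min_le_right _ _
    have : h ^ 2 ≤ (Real.sqrt D / 2) ^ 2 := by
      apply pow_le_pow_left₀ hhp.le h2
    rw [div_pow, Real.sq_sqrt hDp.le] at this
    linarith
  clear_value A Q c1 c2 D h
  refine ⟨1 / (4 * h), h, A / 2, by positivity, hhp, by positivity, ?_, ?_, ?_, ?_⟩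
  · constructor
    · positivity
    · have : 1 / (4 * h) * h = 1/4 := by field_simp
      rw [this]; norm_num
  · have hah : 1 / (4 * h) * h = 1/4 := by field_simp
    rw [hah]
    refine ⟨by positivity, by rw [← hAdef]; linarith, by rw [← hAdef]; linarith⟩
  · have hah : 1 / (4 * h) * h = 1/4 := by field_simp
    rw [hah, ← hQdef]; linarith
  · have hah : 1 / (4 * h) * h = 1/4 := by field_simp
    rw [hah, ← hQdef, ← hAdef]
    have hdenom : A - A / 2 = A / 2 := by ring
    rw [hdenom]
    rw [← lt_div_iff₀' hhp]
    rw [Real.sqrt_lt' (by positivity)]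
    rw [div_lt_iff₀ (by positivity : (0:ℝ) < A / 2)]
    have key : h ^ 2 * (c1 + c2) < ε ^ 2 * (A / 2) := by
      have : h ^ 2 * (c1 + c2) < D * (c1 + c2) := by
        exact mul_lt_mul_of_pos_right hhD (by positivity)
      rw [hD] at this
      rw [div_mul_cancel₀] at this
      · exact this
      · positivity
    have hsq1 : h ^ 2 ≤ 1 := pow_le_one₀ hhp.le hh1
    have expand : Q * (ε * (1 + ε)) * U ^ 2 / 2 + (1 + ε) ^ 2 * (h ^ 2 * U ^ 4 / 16)
        = c1 + c2 * h ^ 2 := by rw [hc1, hc2]; ring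
    rw [expand]
    have step : (c1 + c2 * h ^ 2) * h ^ 2 ≤ (c1 + c2) * h ^ 2 :=
      mul_le_mul_of_nonneg_right
        (add_le_add_right (mul_le_of_le_one_right hc2p.le hsq1) c1) (sq_nonneg h)
    rw [mul_comm] at key
    have : (c1 + c2 * h ^ 2) * h ^ 2 < ε ^ 2 * (A / 2) := lt_of_le_of_lt step key
    have hdiv : (ε / h) ^ 2 = ε ^ 2 / h ^ 2 := by rw [div_pow]
    rw [hdiv, div_mul_eq_mul_div, lt_div_iff₀ (by positivity : (0:ℝ) < h ^ 2)]
    exact this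
end

section
/- Let n, m be natural numbers, let V : ℝⁿ → ℝ be differentiable with gradient ∇V and V(x) ≥ 0 for all x, let f : ℝⁿ × ℝᵐ → ℝⁿ satisfy ⟨∇V(x), f(x,u)⟩ = 0 for all x ∈ ℝⁿ and u ∈ ℝᵐ, and let α > 0. Suppose u : ℝ → ℝᵐ and x : ℝ → ℝⁿ are functions with x differentiable and x'(t) = f(x(t), u(t)) − α·∇V(x(t)) for all t. If V(x(0)) = 0, then V(x(t)) = 0 for all t ≥ 0; that is, the zero level set M = V⁻¹(0) is positively invariant for the stably embedded system. -/
open scoped RealInnerProductSpace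

/-- The zero level set `M = V⁻¹(0)` is positively invariant for the stably
embedded system `ẋ = f(x,u) − α∇V(x)`. -/
theorem zero_level_set_positively_invariant (n m : ℕ)
    (V : EuclideanSpace ℝ (Fin n) → ℝ) (hV : Differentiable ℝ V)
    (hVnonneg : ∀ x, 0 ≤ V x)
    (f : EuclideanSpace ℝ (Fin n) × EuclideanSpace ℝ (Fin m) →
      EuclideanSpace ℝ (Fin n))
    (horth : ∀ (x : EuclideanSpace ℝ (Fin n))
      (u : EuclideanSpace ℝ (Fin m)), ⟪gradient V x, f (x, u)⟫ = 0)
    (α : ℝ) (hα : 0 < α)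
    (u : ℝ → EuclideanSpace ℝ (Fin m)) (x : ℝ → EuclideanSpace ℝ (Fin n))
    (hx : ∀ t : ℝ,
      HasDerivAt x (f (x t, u t) - α • gradient V (x t)) t)
    (hx0 : V (x 0) = 0) :
    ∀ t : ℝ, 0 ≤ t → V (x t) = 0 := by
  have key : ∀ t : ℝ, HasDerivAt (fun s => V (x s))
      (-(α * ‖gradient V (x t)‖ ^ 2)) t := by
    intro t
    have hg : HasGradientAt V (gradient V (x t)) (x t) :=
      (hV (x t)).hasGradientAt
    have := hg.hasFDerivAt.comp_hasDerivAt t (hx t)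
    refine this.congr_deriv ?_
    rw [InnerProductSpace.toDual_apply_apply, inner_sub_right, real_inner_smul_right,
      horth, real_inner_self_eq_norm_sq]
    ring
  have hanti : Antitone (fun s => V (x s)) := by
    apply antitone_of_deriv_nonpos
    · exact fun t => (key t).differentiableAt
    · intro t
      rw [(key t).deriv]
      have : 0 ≤ α * ‖gradient V (x t)‖ ^ 2 :=
        mul_nonneg hα.le (sq_nonneg _)
      linarith
  intro t ht
  have h1 : V (x t) ≤ V (x 0) := hanti ht
  have h2 : 0 ≤ V (x t) := hVnonneg _
  linarith [hx0 ▸ h1]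
end
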